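/- arXiv:2001.05205 — 4 statements merged into one kernel-verified Lean document; each statement's English description precedes it below -/
import Mathlib

section
/- For every α ∈ [0, π], sin(α) - α * cos(α) ≥ (α / π)^3. -/
/-!
Combining `x - x³/6 ≤ sin x` with the bound `cos x ≤ 1 - 2x²/π²` on `[0, π]` gives
`sin x - x cos x ≥ (2/π² - 1/6) x³`, and the numerical fact `2π - π³/6 ≥ 1` turns the
constant into `1/π³`.
-/

open Real

theorem Real.one_le_two_mul_pi_sub_pi_cube_div_six : 1 ≤ 2 * π - π ^ 3 / 6 := by
  nlinarith [pi_gt_three, pi_lt_d2, mul_pos pi_pos pi_pos]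

theorem Real.inv_pi_cube_le_two_div_pi_sq_sub : 1 / π ^ 3 ≤ 2 / π ^ 2 - 1 / 6 := by
  have hπ : 0 < π := pi_pos
  rw [div_le_iff₀ (by positivity)]
  calc (1 : ℝ) ≤ 2 * π - π ^ 3 / 6 := one_le_two_mul_pi_sub_pi_cube_div_six
    _ = (2 / π ^ 2 - 1 / 6) * π ^ 3 := by field_simp

theorem Real.mul_cube_le_sin_sub_mul_cos {x : ℝ} (hx₀ : 0 ≤ x) (hx : x ≤ π) :
    (2 / π ^ 2 - 1 / 6) * x ^ 3 ≤ sin x - x * cos x := by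
  have hsin : x - x ^ 3 / 6 ≤ sin x := sin_ge_sub_cube hx₀
  have hcos : cos x ≤ 1 - 2 / π ^ 2 * x ^ 2 :=
    cos_le_one_sub_mul_cos_sq (by rwa [abs_of_nonneg hx₀])
  calc (2 / π ^ 2 - 1 / 6) * x ^ 3 = x - x ^ 3 / 6 - x * (1 - 2 / π ^ 2 * x ^ 2) := by ring
    _ ≤ sin x - x * cos x := by gcongr

theorem stmt_2 : ∀ α ∈ Set.Icc (0 : ℝ) π,
    Real.sin α - α * Real.cos α ≥ (α / π) ^ 3 := by
  rintro α ⟨hα₀, hα⟩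
  calc (α / π) ^ 3 = 1 / π ^ 3 * α ^ 3 := by ring
    _ ≤ (2 / π ^ 2 - 1 / 6) * α ^ 3 := by gcongr; exact inv_pi_cube_le_two_div_pi_sq_sub
    _ ≤ sin α - α * cos α := mul_cube_le_sin_sub_mul_cos hα₀ hα
end

section
/- Fix α ≥ 0 and δ ∈ (0, π]. Let a, b be nonzero vectors in ℝ² whose angle θ(a,b) = arccos(⟨a,b⟩/(‖a‖‖b‖)) satisfies θ(a,b) ≤ π − δ, and let u ∈ ℝ² be a unit vector. Then ∫_{y ∈ ℝ²} 1{⟨a,y⟩>0} · 1{⟨b,y⟩>0} · 1{‖y‖≤α} · ⟨u,y⟩² dy ≥ (α⁴ / (8√2)) · sin³(δ/4). -/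
/-!
Transport the problem to `ℂ` by a linear isometry. Since the angle between `a` and `b` is at most
`π - δ`, turning their bisector by `±δ/4` gives unit vectors `e` whose angles with `a` and `b` are
at most `π/2 - δ/4`; the two choices are `δ/2` apart, so one of them also has
`|⟪e, u⟫| ≥ sin (δ/4) =: σ`. After rotating `e` to `1`, the rectangle
`[α/2, 4α/5] × (-σα/2, σα/2)` lies in the wedge (there `|im z| < σ re z`) and in the ball
(as `σ ≤ 1`), and the integral of `(re u * s + im u * t)²` over it is at least
`(129/1000) α⁴ σ³ ≥ α⁴ σ³ / 8`.
-/

open Real MeasureTheory InnerProductGeometry Set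
open scoped RealInnerProductSpace

section Wedge

variable {E F : Type*} [NormedAddCommGroup E] [InnerProductSpace ℝ E] [NormedAddCommGroup F]
  [InnerProductSpace ℝ F]

def wedgeBall (a b : E) (α : ℝ) : Set E := {y | 0 < ⟪a, y⟫ ∧ 0 < ⟪b, y⟫ ∧ ‖y‖ ≤ α}

lemma LinearIsometryEquiv.preimage_wedgeBall (T : E ≃ₗᵢ[ℝ] F) (a b : F) (α : ℝ) :
    T ⁻¹' wedgeBall a b α = wedgeBall (T.symm a) (T.symm b) α := by
  ext y
  simp [wedgeBall, ← T.inner_map_map]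

variable [FiniteDimensional ℝ E] [MeasurableSpace E] [BorelSpace E] [FiniteDimensional ℝ F]
  [MeasurableSpace F] [BorelSpace F]

lemma LinearIsometryEquiv.setIntegral_wedgeBall (T : E ≃ₗᵢ[ℝ] F) (a b u : E) (α : ℝ) :
    ∫ y in wedgeBall (T a) (T b) α, ⟪T u, y⟫ ^ 2 = ∫ x in wedgeBall a b α, ⟪u, x⟫ ^ 2 := by
  rw [← T.measurePreserving.setIntegral_preimage_emb T.toHomeomorph.measurableEmbedding,
    T.preimage_wedgeBall]
  simp

lemma integrableOn_wedgeBall_inner_sq (a b u : E) (α : ℝ) :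
    IntegrableOn (fun y => ⟪u, y⟫ ^ 2) (wedgeBall a b α) := by
  refine (((continuous_const.inner continuous_id).pow 2).continuousOn.integrableOn_compact
    (isCompact_closedBall 0 α)).mono_set fun y hy => ?_
  exact mem_closedBall_zero_iff.mpr hy.2.2

end Wedge

lemma sin_le_cos_of_abs_le {x y : ℝ} (hy : -(π / 2) ≤ y) (hx : |x| ≤ π / 2 - y) :
    sin y ≤ cos x := by
  rw [← cos_abs, ← cos_pi_div_two_sub]
  exact cos_le_cos_of_nonneg_of_le_pi (abs_nonneg x) (by linarith) hx

lemma sin_le_abs_cos_add_or_sub (x : ℝ) {ε : ℝ} (hε : 0 ≤ cos (2 * ε)) :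
    sin ε ≤ |cos (x + ε)| ∨ sin ε ≤ |cos (x - ε)| := by
  -- `cos² (x + ε) + cos² (x - ε) = 1 + cos (2x) cos (2ε) ≥ 1 - cos (2ε) = 2 sin² ε`
  have hsum : 2 * sin ε ^ 2 ≤ cos (x + ε) ^ 2 + cos (x - ε) ^ 2 := by
    rw [cos_two_mul'] at hε
    rw [cos_add, cos_sub]
    nlinarith [mul_nonneg (sq_nonneg (cos x)) hε, sin_sq_add_cos_sq x]
  rcases le_or_gt (sin ε ^ 2) (cos (x + ε) ^ 2) with h | h
  · exact .inl ((le_abs_self _).trans (sq_le_sq.mp h))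
  · exact .inr ((le_abs_self _).trans (sq_le_sq.mp (by linarith)))

lemma exists_cos_ge_sin_quarter {δ d : ℝ} (hδ : 0 ≤ δ) (hδπ : δ ≤ π) (hd : |d| ≤ π - δ)
    (φ : ℝ) :
    ∃ ψ, sin (δ / 4) ≤ cos ψ ∧ sin (δ / 4) ≤ cos (ψ - d) ∧ sin (δ / 4) ≤ |cos (ψ - φ)| := by
  have near : ∀ τ, |τ| ≤ δ / 4 →
      sin (δ / 4) ≤ cos (d / 2 + τ) ∧ sin (δ / 4) ≤ cos (d / 2 + τ - d) := by
    intro τ hτ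
    rw [abs_le] at hd hτ
    constructor <;> refine sin_le_cos_of_abs_le (by linarith [pi_pos]) (abs_le.mpr ⟨?_, ?_⟩) <;>
      linarith
  have hcos : 0 ≤ cos (2 * (δ / 4)) := cos_nonneg_of_mem_Icc ⟨by linarith [pi_pos], by linarith⟩
  rcases sin_le_abs_cos_add_or_sub (d / 2 - φ) hcos with h | h
  · obtain ⟨ha, hb⟩ := near (δ / 4) (abs_of_nonneg (by linarith)).le
    exact ⟨_, ha, hb, by convert h using 3; ring⟩
  · obtain ⟨ha, hb⟩ := near (-(δ / 4)) (by rw [abs_neg, abs_of_nonneg (by linarith)])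
    exact ⟨_, ha, hb, by convert h using 3; ring⟩

lemma integral_quadratic (A B C s t : ℝ) :
    ∫ x in s..t, (A * x ^ 2 + B * x + C) =
      A * (t ^ 3 - s ^ 3) / 3 + B * (t ^ 2 - s ^ 2) / 2 + C * (t - s) := by
  have hc (f : ℝ → ℝ) (hf : Continuous f) : IntervalIntegrable f volume s t :=
    hf.intervalIntegrable s t
  rw [intervalIntegral.integral_add (hc _ (by fun_prop)) (hc _ (by fun_prop)),
    intervalIntegral.integral_add (hc _ (by fun_prop)) (hc _ (by fun_prop)),
    intervalIntegral.integral_const_mul, intervalIntegral.integral_const_mul]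
  simp [integral_pow]
  ring

lemma setIntegral_Icc_prod_Ioo_linear_sq (p q s₁ s₂ w : ℝ) (hs : s₁ ≤ s₂) (hw : 0 ≤ w) :
    ∫ x in Icc s₁ s₂ ×ˢ Ioo (-w) w, (p * x.1 + q * x.2) ^ 2 =
      2 * w * p ^ 2 * (s₂ ^ 3 - s₁ ^ 3) / 3 + 2 * q ^ 2 * w ^ 3 * (s₂ - s₁) / 3 := by
  have hint : IntegrableOn (fun x : ℝ × ℝ => (p * x.1 + q * x.2) ^ 2)
      (Icc s₁ s₂ ×ˢ Ioo (-w) w) (volume.prod volume) :=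
    (ContinuousOn.integrableOn_compact (isCompact_Icc.prod isCompact_Icc) (by fun_prop)).mono_set
      (prod_mono subset_rfl Ioo_subset_Icc_self)
  have hfiber (x : ℝ) :
      ∫ y in Ioo (-w) w, (p * x + q * y) ^ 2 = 2 * w * p ^ 2 * x ^ 2 + 2 * q ^ 2 * w ^ 3 / 3 := by
    rw [← integral_Ioc_eq_integral_Ioo, ← intervalIntegral.integral_of_le (by linarith)]
    simp_rw [show ∀ y, (p * x + q * y) ^ 2 = q ^ 2 * y ^ 2 + 2 * p * x * q * y + (p * x) ^ 2 by
      intro y; ring]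
    rw [integral_quadratic]
    ring
  rw [Measure.volume_eq_prod, setIntegral_prod _ hint]
  simp_rw [hfiber]
  rw [integral_Icc_eq_integral_Ioc, ← intervalIntegral.integral_of_le hs]
  have h := integral_quadratic (2 * w * p ^ 2) 0 (2 * q ^ 2 * w ^ 3 / 3) s₁ s₂
  simp only [zero_mul, add_zero] at h
  rw [h]
  ring

namespace Complex

lemma inner_exp_mul_I (φ : ℝ) (z : ℂ) :
    ⟪exp (φ * I), z⟫ = ‖z‖ * Real.cos (φ - arg z) := by
  simp only [Complex.inner, mul_re, conj_re, conj_im, exp_ofReal_mul_I_re, exp_ofReal_mul_I_im]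
  rw [Real.cos_sub, ← norm_mul_cos_arg, ← norm_mul_sin_arg]
  ring

lemma inner_circle_eq_re (e : Circle) (z : ℂ) : ⟪(e : ℂ), z⟫ = (rotation e⁻¹ z).re := by
  rw [Complex.inner, rotation_apply, Circle.coe_inv_eq_conj, mul_comm]

lemma inner_pos_of_abs_im_lt {a z : ℂ} {σ : ℝ} (ha : a ≠ 0) (hσ : 0 ≤ σ)
    (hσa : σ * ‖a‖ ≤ a.re) (hz : |z.im| < σ * z.re) : 0 < ⟪a, z⟫ := by
  have hre : 0 ≤ z.re := by nlinarith [abs_nonneg z.im]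
  have hna : 0 < ‖a‖ := norm_pos_iff.mpr ha
  have him : |z.im * a.im| ≤ |z.im| * ‖a‖ := by
    rw [abs_mul]
    exact mul_le_mul_of_nonneg_left (abs_im_le_norm a) (abs_nonneg _)
  rw [Complex.inner, mul_re, conj_re, conj_im]
  nlinarith [mul_le_mul_of_nonneg_left hσa hre, neg_abs_le (z.im * a.im),
    mul_pos (sub_pos.mpr hz) hna]

lemma exists_circle_inner_ge {a b : ℂ} (ha : a ≠ 0) (hb : b ≠ 0) {δ : ℝ} (hδ : 0 ≤ δ)
    (hδπ : δ ≤ π) (hab : angle a b ≤ π - δ) (u : ℂ) :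
    ∃ e : Circle, Real.sin (δ / 4) * ‖a‖ ≤ ⟪(e : ℂ), a⟫ ∧ Real.sin (δ / 4) * ‖b‖ ≤ ⟪(e : ℂ), b⟫ ∧
      Real.sin (δ / 4) * ‖u‖ ≤ |⟪(e : ℂ), u⟫| := by
  have hd : |arg (b / a)| ≤ π - δ := by rwa [angle_comm, angle_eq_abs_arg hb ha] at hab
  obtain ⟨ψ, hψa, hψb, hψu⟩ := exists_cos_ge_sin_quarter hδ hδπ hd (arg u - arg a)
  have hcos_b : Real.cos (ψ - arg (b / a)) = Real.cos (arg a + ψ - arg b) := by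
    rw [← Real.Angle.cos_coe, ← Real.Angle.cos_coe, Real.Angle.coe_sub, arg_div_coe_angle hb ha,
      Real.Angle.coe_sub, Real.Angle.coe_add]
    congr 1
    abel
  refine ⟨Circle.exp (arg a + ψ), ?_, ?_, ?_⟩ <;> rw [Circle.coe_exp, inner_exp_mul_I, mul_comm]
  · rw [add_sub_cancel_left]
    exact mul_le_mul_of_nonneg_left hψa (norm_nonneg a)
  · rw [← hcos_b]
    exact mul_le_mul_of_nonneg_left hψb (norm_nonneg b)
  · rw [abs_mul, abs_norm, show arg a + ψ - arg u = ψ - (arg u - arg a) by ring]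
    exact mul_le_mul_of_nonneg_left hψu (norm_nonneg u)

lemma le_integral_wedgeBall_of_re_ge {a b u : ℂ} {σ α : ℝ} (ha : a ≠ 0) (hb : b ≠ 0)
    (hσ : 0 ≤ σ) (hα : 0 ≤ α) (hσa : σ * ‖a‖ ≤ a.re) (hσb : σ * ‖b‖ ≤ b.re)
    (hσu : σ * ‖u‖ ≤ |u.re|) :
    α ^ 4 * σ ^ 3 * ‖u‖ ^ 2 / 8 ≤ ∫ z in wedgeBall a b α, ⟪u, z⟫ ^ 2 := by
  set w := σ * α / 2 with hw
  set R := measurableEquivRealProd ⁻¹' (Icc (α / 2) (4 * α / 5) ×ˢ Ioo (-w) w)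
  have hσ1 : σ ≤ 1 :=
    le_of_mul_le_mul_right (by simpa using hσa.trans (re_le_norm a)) (norm_pos_iff.mpr ha)
  have hw0 : 0 ≤ w := by positivity
  have hR : R ⊆ wedgeBall a b α := by
    rintro z ⟨⟨hx₁, hx₂⟩, hy⟩
    simp only [measurableEquivRealProd_apply] at hx₁ hx₂ hy
    replace hy : |z.im| < w := abs_lt.mpr hy
    have hz : |z.im| < σ * z.re := by linarith [mul_le_mul_of_nonneg_left hx₁ hσ]
    refine ⟨inner_pos_of_abs_im_lt ha hσ hσa hz, inner_pos_of_abs_im_lt hb hσ hσb hz, ?_⟩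
    have hre : z.re ^ 2 ≤ (4 * α / 5) ^ 2 := pow_le_pow_left₀ (by linarith) hx₂ 2
    have him : z.im ^ 2 ≤ (α / 2) ^ 2 := sq_le_sq.mpr (by
      rw [abs_of_nonneg (by linarith : 0 ≤ α / 2)]
      nlinarith [mul_le_mul_of_nonneg_right hσ1 hα])
    rw [← sq_le_sq₀ (norm_nonneg _) hα, ← normSq_eq_norm_sq, normSq_apply]
    nlinarith
  have hsq : (σ * ‖u‖) ^ 2 ≤ u.re ^ 2 := by
    simpa using pow_le_pow_left₀ (by positivity) hσu 2
  calc α ^ 4 * σ ^ 3 * ‖u‖ ^ 2 / 8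
      ≤ 2 * w * u.re ^ 2 * ((4 * α / 5) ^ 3 - (α / 2) ^ 3) / 3 := by
        rw [hw]
        nlinarith [mul_le_mul_of_nonneg_left hsq (by positivity : 0 ≤ α ^ 4 * σ),
          (by positivity : 0 ≤ α ^ 4 * σ * u.re ^ 2)]
    _ ≤ ∫ x in Icc (α / 2) (4 * α / 5) ×ˢ Ioo (-w) w, (u.re * x.1 + u.im * x.2) ^ 2 := by
        rw [setIntegral_Icc_prod_Ioo_linear_sq _ _ _ _ _ (by linarith) hw0]
        have : 0 ≤ 2 * u.im ^ 2 * w ^ 3 * (4 * α / 5 - α / 2) / 3 :=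
          div_nonneg (mul_nonneg (by positivity) (by linarith)) zero_le_three
        linarith
    _ = ∫ z in R, ⟪u, z⟫ ^ 2 := by
        rw [← volume_preserving_equiv_real_prod.setIntegral_preimage_emb
          measurableEquivRealProd.measurableEmbedding]
        congr 1
        ext z
        simp only [measurableEquivRealProd_apply, Complex.inner, mul_re, conj_re, conj_im]
        ring
    _ ≤ ∫ z in wedgeBall a b α, ⟪u, z⟫ ^ 2 :=
        setIntegral_mono_set (integrableOn_wedgeBall_inner_sq a b u α)
          (ae_of_all _ fun _ => sq_nonneg _) hR.eventuallyLE

theorem le_integral_wedgeBall {a b : ℂ} (ha : a ≠ 0) (hb : b ≠ 0) {δ α : ℝ} (hδ : 0 ≤ δ)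
    (hδπ : δ ≤ π) (hab : angle a b ≤ π - δ) (hα : 0 ≤ α) (u : ℂ) :
    α ^ 4 * Real.sin (δ / 4) ^ 3 * ‖u‖ ^ 2 / 8 ≤ ∫ z in wedgeBall a b α, ⟪u, z⟫ ^ 2 := by
  obtain ⟨e, hea, heb, heu⟩ := exists_circle_inner_ge ha hb hδ hδπ hab u
  set T := rotation e⁻¹
  rw [inner_circle_eq_re, ← T.norm_map] at hea heb heu
  rw [← T.setIntegral_wedgeBall, ← T.norm_map u]
  exact le_integral_wedgeBall_of_re_ge (EmbeddingLike.map_ne_zero_iff.mpr ha)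
    (EmbeddingLike.map_ne_zero_iff.mpr hb)
    (Real.sin_nonneg_of_nonneg_of_le_pi (by linarith) (by linarith [pi_pos])) hα hea heb heu

end Complex

theorem stmt_5 (α δ : ℝ) (hα : 0 ≤ α) (hδ : δ ∈ Set.Ioc 0 π)
    (a b u : EuclideanSpace ℝ (Fin 2)) (ha : a ≠ 0) (hb : b ≠ 0)
    (hθ : Real.arccos (⟪a, b⟫ / (‖a‖ * ‖b‖)) ≤ π - δ) (hu : ‖u‖ = 1) :
    (∫ y in {y : EuclideanSpace ℝ (Fin 2) | 0 < ⟪a, y⟫ ∧ 0 < ⟪b, y⟫ ∧ ‖y‖ ≤ α},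
        ⟪u, y⟫ ^ 2) ≥ α ^ 4 / (8 * Real.sqrt 2) * (Real.sin (δ / 4)) ^ 3 := by
  obtain ⟨hδ0, hδπ⟩ := hδ
  let T := Complex.orthonormalBasisOneI.repr.symm
  have hab : angle (T a) (T b) ≤ π - δ := (T.toLinearIsometry.angle_map a b).trans_le hθ
  have key := Complex.le_integral_wedgeBall (EmbeddingLike.map_ne_zero_iff.mpr ha)
    (EmbeddingLike.map_ne_zero_iff.mpr hb) hδ0.le hδπ hab hα (T u)
  rw [T.setIntegral_wedgeBall, T.norm_map, hu] at key
  have hsin : 0 ≤ sin (δ / 4) ^ 3 :=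
    pow_nonneg (sin_nonneg_of_nonneg_of_le_pi (by linarith) (by linarith [pi_pos])) 3
  have hdiv : α ^ 4 / (8 * √2) ≤ α ^ 4 / 8 :=
    div_le_div_of_nonneg_left (by positivity) (by norm_num)
      (by nlinarith [one_le_sqrt.mpr one_le_two])
  calc α ^ 4 / (8 * √2) * sin (δ / 4) ^ 3 ≤ α ^ 4 / 8 * sin (δ / 4) ^ 3 :=
        mul_le_mul_of_nonneg_right hdiv hsin
    _ = α ^ 4 * sin (δ / 4) ^ 3 * 1 ^ 2 / 8 := by ring
    _ ≤ _ := key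
end

section
/- For the closed-form ReLU-Gaussian gradient ∇F(w) = (1/2)w − (1/(2π))(‖v‖ sin(θ) ŵ + (π − θ) v), where θ = θ(w,v) and ŵ = w/‖w‖, and for any nonzero w not parallel to v, the vector u = v̂ − (ŵᵀv̂)ŵ (the component of v̂ orthogonal to ŵ) satisfies ⟨u, ∇F(w)⟩ = −((π − θ)/(2π)) (1 − (ŵᵀv̂)²) ‖v‖ ≤ 0. -/
open Real
open scoped RealInnerProductSpace

theorem stmt_12 (d : ℕ) (w v g u : EuclideanSpace ℝ (Fin d)) (θ : ℝ)
    (hw : w ≠ 0) (hv : v ≠ 0) (hpar : ∀ c : ℝ, v ≠ c • w)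
    (hθ : θ = Real.arccos (⟪w, v⟫ / (‖w‖ * ‖v‖)))
    (hg : g = (2:ℝ)⁻¹ • w -
      (2 * π)⁻¹ • ((‖v‖ * Real.sin θ) • (‖w‖⁻¹ • w) + (π - θ) • v))
    (hu : u = ‖v‖⁻¹ • v - ⟪‖w‖⁻¹ • w, ‖v‖⁻¹ • v⟫ • (‖w‖⁻¹ • w)) :
    ⟪u, g⟫ = -((π - θ) / (2 * π)) * (1 - ⟪‖w‖⁻¹ • w, ‖v‖⁻¹ • v⟫ ^ 2) * ‖v‖ ∧
      ⟪u, g⟫ ≤ 0 := by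
  have hnw : ‖w‖ ≠ 0 := norm_ne_zero_iff.mpr hw
  have hnv : ‖v‖ ≠ 0 := norm_ne_zero_iff.mpr hv
  have hπ : (0:ℝ) < π := Real.pi_pos
  have ht : ⟪‖w‖⁻¹ • w, ‖v‖⁻¹ • v⟫ = ⟪w, v⟫ / (‖w‖ * ‖v‖) := by
    rw [real_inner_smul_left, real_inner_smul_right]; field_simp
  have habs : |⟪w, v⟫ / (‖w‖ * ‖v‖)| ≤ 1 :=
    abs_real_inner_div_norm_mul_norm_le_one w v
  have h1 : (1:ℝ) - ⟪‖w‖⁻¹ • w, ‖v‖⁻¹ • v⟫ ^ 2 ≥ 0 := by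
    rw [ht]
    nlinarith [abs_nonneg (⟪w, v⟫ / (‖w‖ * ‖v‖)), sq_abs (⟪w, v⟫ / (‖w‖ * ‖v‖))]
  have hθle : θ ≤ π := by rw [hθ]; exact Real.arccos_le_pi _
  have hww : ⟪w, w⟫ = ‖w‖ * ‖w‖ := real_inner_self_eq_norm_mul_norm w
  have hvw : ⟪v, w⟫ = ⟪w, v⟫ := real_inner_comm w v
  have key : ⟪u, g⟫ = -((π - θ) / (2 * π)) * (1 - ⟪‖w‖⁻¹ • w, ‖v‖⁻¹ • v⟫ ^ 2) * ‖v‖ := by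
    subst hg hu
    simp only [inner_sub_left, inner_sub_right, inner_add_right, real_inner_smul_left,
      real_inner_smul_right, hww, hvw, real_inner_self_eq_norm_mul_norm]
    field_simp
    ring
  refine ⟨key, ?_⟩
  rw [key]
  have h2 : (0:ℝ) ≤ (π - θ) / (2 * π) := div_nonneg (by linarith) (by positivity)
  have := mul_nonneg (mul_nonneg h2 h1) (norm_nonneg v)
  nlinarith
end

section
/- For the closed-form ReLU-Gaussian gradient ∇F(w) = (1/2)w − (1/(2π))(‖v‖ sin(θ) ŵ + (π − θ) v) with θ = θ(w,v) ∈ [0, π − α] for some α ∈ (0, π], if w ≠ 0 and ‖w‖ ≤ ‖v‖ α³ / π⁴, then −⟨w, ∇F(w)⟩ ≥ 0. -/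
/-!
Writing `θ` for the angle between `w` and `v`, the inner product factors as
`-⟪w, ∇F(w)⟫ = ‖w‖ / (2π) * (‖v‖ * (sin θ + (π - θ) cos θ) - π ‖w‖)`.
With `x = π - θ ≥ α`, the bracket's trigonometric factor is `sin x - x cos x ≥ (x / π)³ ≥ (α / π)³`,
which the bound on `‖w‖` makes at least `π ‖w‖ / ‖v‖`.
-/

open Real InnerProductGeometry
open scoped RealInnerProductSpace

namespace Real

/-- Combines `x - x³/6 ≤ sin x` with `cos x ≤ 1 - 2x²/π²`; the constant survives because
`6 + π³ ≤ 12π`. -/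
theorem div_pi_pow_three_le_sin_sub_mul_cos {x : ℝ} (hx₀ : 0 ≤ x) (hxπ : x ≤ π) :
    (x / π) ^ 3 ≤ sin x - x * cos x := by
  have hsin := sin_ge_sub_cube hx₀
  have hcos : cos x ≤ 1 - 2 / π ^ 2 * x ^ 2 :=
    cos_le_one_sub_mul_cos_sq (by rwa [abs_of_nonneg hx₀])
  have hconst : 1 / π ^ 3 ≤ 2 / π ^ 2 - 1 / 6 := by
    rw [div_le_iff₀ (by positivity)]
    have : 2 / π ^ 2 * π ^ 3 = 2 * π := by field_simp
    nlinarith [pi_gt_d6, pi_lt_d2]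
  calc (x / π) ^ 3 = x ^ 3 * (1 / π ^ 3) := by ring
    _ ≤ x ^ 3 * (2 / π ^ 2 - 1 / 6) := by gcongr
    _ = (x - x ^ 3 / 6) - x * (1 - 2 / π ^ 2 * x ^ 2) := by ring
    _ ≤ sin x - x * cos x := by gcongr

theorem div_pi_pow_three_le_sin_add_pi_sub_mul_cos {θ α : ℝ} (hθ₀ : 0 ≤ θ) (hθπ : θ ≤ π)
    (hθα : θ ≤ π - α) :
    (α / π) ^ 3 ≤ sin θ + (π - θ) * cos θ := by
  have key := div_pi_pow_three_le_sin_sub_mul_cos (x := π - θ) (by linarith) (by linarith)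
  rw [sin_pi_sub, cos_pi_sub] at key
  have hαθ : (α / π) ^ 3 ≤ ((π - θ) / π) ^ 3 :=
    (Odd.pow_le_pow (by decide)).2 (by gcongr; linarith)
  linarith

end Real

section ReluGaussianGrad

variable {E : Type*} [NormedAddCommGroup E] [InnerProductSpace ℝ E]

/-- The gradient at `w` of the population loss of a single ReLU neuron with Gaussian inputs
and teacher `v`. -/
noncomputable def reluGaussianGrad (w v : E) : E :=
  (2:ℝ)⁻¹ • w - (2 * π)⁻¹ • ((‖v‖ * sin (angle w v)) • (‖w‖⁻¹ • w) + (π - angle w v) • v)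

theorem neg_inner_reluGaussianGrad (w v : E) :
    -⟪w, reluGaussianGrad w v⟫ = ‖w‖ / (2 * π) *
      (‖v‖ * (sin (angle w v) + (π - angle w v) * cos (angle w v)) - π * ‖w‖) := by
  have hwv : ⟪w, v⟫ = cos (angle w v) * (‖w‖ * ‖v‖) := (cos_angle_mul_norm_mul_norm w v).symm
  have hww : ‖w‖⁻¹ * ‖w‖ ^ 2 = ‖w‖ := by
    rcases eq_or_ne ‖w‖ 0 with h | h
    · simp [h]
    · field_simp
  simp only [reluGaussianGrad, inner_sub_right, inner_add_right, real_inner_smul_right,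
    real_inner_self_eq_norm_sq, hwv, hww]
  field_simp
  ring

end ReluGaussianGrad

theorem stmt_13_general (d : ℕ) (w v g : EuclideanSpace ℝ (Fin d)) (θ α : ℝ)
    (hθ : θ = Real.arccos (⟪w, v⟫ / (‖w‖ * ‖v‖)))
    (hθα : θ ≤ π - α)
    (hg : g = (2:ℝ)⁻¹ • w -
      (2 * π)⁻¹ • ((‖v‖ * Real.sin θ) • (‖w‖⁻¹ • w) + (π - θ) • v))
    (hnorm : ‖w‖ ≤ ‖v‖ * α ^ 3 / π ^ 4) :
    -⟪w, g⟫ ≥ 0 := by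
  replace hθ : θ = angle w v := hθ
  subst hθ
  replace hg : g = reluGaussianGrad w v := hg
  have htrig := div_pi_pow_three_le_sin_add_pi_sub_mul_cos (angle_nonneg w v) (angle_le_pi w v) hθα
  have hbound : π * ‖w‖ ≤
      ‖v‖ * (sin (angle w v) + (π - angle w v) * cos (angle w v)) :=
    calc π * ‖w‖ ≤ π * (‖v‖ * α ^ 3 / π ^ 4) := by gcongr
      _ = ‖v‖ * (α / π) ^ 3 := by field_simp
      _ ≤ _ := by gcongr
  rw [hg, neg_inner_reluGaussianGrad]
  exact mul_nonneg (by positivity) (sub_nonneg.2 hbound)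

theorem stmt_13 (d : ℕ) (w v g : EuclideanSpace ℝ (Fin d)) (θ α : ℝ)
    (hw : w ≠ 0) (hv : v ≠ 0) (hα : α ∈ Set.Ioc 0 π)
    (hθ : θ = Real.arccos (⟪w, v⟫ / (‖w‖ * ‖v‖)))
    (hθα : θ ≤ π - α)
    (hg : g = (2:ℝ)⁻¹ • w -
      (2 * π)⁻¹ • ((‖v‖ * Real.sin θ) • (‖w‖⁻¹ • w) + (π - θ) • v))
    (hnorm : ‖w‖ ≤ ‖v‖ * α ^ 3 / π ^ 4) :
    -⟪w, g⟫ ≥ 0 :=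
  stmt_13_general d w v g θ α hθ hθα hg hnorm
end
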